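/- arXiv:2307.02282 — 3 statements merged into one kernel-verified Lean document; each statement's English description precedes it below -/
import Mathlib

section
/- Let (x, A) be a seed with x=(x_1,…,x_n,y_1,…,y_n), and fix an index k with 1 ≤ k ≤ n. Define x'_i = x_i for i ≠ k and x'_k = x_k^{-1}(∏_{i=1}^n x_i^{[a_{ik}]_+} ∏_{i=1}^n y_i^{[a_{n+i,k}]_+} + ∏_{i=1}^n x_i^{[-a_{ik}]_+} ∏_{i=1}^n y_i^{[-a_{n+i,k}]_+}), where [a]_+ := max(a,0). Then the 2n-tuple (x'_1,…,x'_n,y_1,…,y_n) is again a free generating set of F over ℚ; in particular, the pair μ_k(x,A) = ((x'_1,…,x'_n,y_1,…,y_n), μ_k A) is again a seed. -/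
noncomputable section

/-- The ambient field `F`: the field of rational functions in `2n` variables over `ℚ`,
realized as the fraction field of the polynomial ring in the `2n` indeterminates
`x_1, …, x_n` (indexed by `Sum.inl`) and `y_1, …, y_n` (indexed by `Sum.inr`). -/
abbrev CField (n : ℕ) : Type := FractionRing (MvPolynomial (Fin n ⊕ Fin n) ℚ)

/-- Mutation of an integer matrix (rows indexed by `ρ`, columns by `Fin n`) at column `k`,
where `e : Fin n → ρ` identifies each column index with a row index.
`(μ_k A)_{ij} = -a_{ij}` if `i = k` or `j = k`, and
`(μ_k A)_{ij} = a_{ij} + a_{ik}[a_{kj}]_+ + [-a_{ik}]_+ a_{kj}` otherwise, where `[a]_+ = max a 0`. -/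
def matMutate {ρ : Type*} [DecidableEq ρ] {n : ℕ} (e : Fin n → ρ)
    (A : Matrix ρ (Fin n) ℤ) (k : Fin n) : Matrix ρ (Fin n) ℤ :=
  fun i j =>
    if i = e k ∨ j = k then -A i j
    else A i j + A i k * max (A (e k) j) 0 + max (-A i k) 0 * A (e k) j

/-- The mutated `2n`-tuple of the seed mutation at `k`:
`x'_i = x_i` for `i ≠ k`, the coefficients `y_i` are unchanged, and
`x'_k = x_k⁻¹ (∏ x_i^{[a_{ik}]_+} ∏ y_i^{[a_{n+i,k}]_+} + ∏ x_i^{[-a_{ik}]_+} ∏ y_i^{[-a_{n+i,k}]_+})`,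
where `[a]_+ = max a 0` (note `Int.toNat a = max a 0` as a natural number). -/
def seedMutX {n : ℕ} (x : Fin n ⊕ Fin n → CField n)
    (A : Matrix (Fin n ⊕ Fin n) (Fin n) ℤ) (k : Fin n) : Fin n ⊕ Fin n → CField n
  | Sum.inl i =>
      if i = k then
        (x (Sum.inl k))⁻¹ *
          ((∏ i' : Fin n, x (Sum.inl i') ^ (A (Sum.inl i') k).toNat) *
              (∏ i' : Fin n, x (Sum.inr i') ^ (A (Sum.inr i') k).toNat) +
            (∏ i' : Fin n, x (Sum.inl i') ^ (-(A (Sum.inl i') k)).toNat) *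
              (∏ i' : Fin n, x (Sum.inr i') ^ (-(A (Sum.inr i') k)).toNat))
      else x (Sum.inl i)
  | Sum.inr i => x (Sum.inr i)

/-!
Write `M` for the exchange binomial, so that `x'_k x_k = M`. Since the diagonal of a
skew-symmetrizable matrix vanishes, `M` is a nonzero polynomial in the generators other than
`x_k`. Hence `x'_k` is transcendental over the `ℚ`-algebra generated by them, just as `x_k` is,
and `x_k = M / x'_k` lies in the field generated by the new tuple. A skew-symmetrizer `d` of `A`
also works for `μ_k A`, because `[a_{kj}]_+ d_j = [-a_{jk}]_+ d_k`.
-/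

open Function

theorem Set.image_update_compl_singleton {α β : Type*} [DecidableEq α] (f : α → β) (a : α)
    (b : β) : update f a b '' {a}ᶜ = f '' {a}ᶜ :=
  Set.image_congr fun _ hi => update_of_ne hi _ _

section Exchange

variable {R K ι : Type*} [CommRing R] [Field K] [Algebra R K] [DecidableEq ι]
  {x : ι → K} {k : ι} {M : K}

theorem Transcendental.inv_mul_algebraMap [NoZeroDivisors R] {y : K} (hy : Transcendental R y)
    {m : R} (hm : m ≠ 0) : Transcendental R (y⁻¹ * algebraMap R K m) := fun h =>
  hy <| IsAlgebraic.inv_iff.mp <| IsAlgebraic.of_smul (mem_nonZeroDivisors_of_ne_zero hm) <| by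
    rwa [Algebra.smul_def, mul_comm]

theorem AlgebraicIndependent.update_inv_mul (hx : AlgebraicIndependent R x)
    (hM : M ∈ Algebra.adjoin R (x '' {k}ᶜ)) (hM0 : M ≠ 0) :
    AlgebraicIndependent R (update x k ((x k)⁻¹ * M)) := by
  obtain ⟨hrest, hxk⟩ := (AlgebraicIndependent.iff_transcendental_adjoin_image k).mp hx
  refine (AlgebraicIndependent.iff_transcendental_adjoin_image k).mpr ⟨?_, ?_⟩
  · convert hrest using 2 with j
    exact update_of_ne j.2 _ _
  · rw [Set.image_update_compl_singleton, update_self]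
    exact hxk.inv_mul_algebraMap (m := ⟨M, hM⟩) (Subtype.coe_ne_coe.mp hM0)

end Exchange

section Generation

variable {F K ι : Type*} [Field F] [Field K] [Algebra F K] [DecidableEq ι]
  {x : ι → K} {k : ι} {M : K}

theorem IntermediateField.adjoin_range_update_inv_mul_le
    (hM : M ∈ Algebra.adjoin F (x '' {k}ᶜ)) :
    adjoin F (Set.range (update x k ((x k)⁻¹ * M))) ≤ adjoin F (Set.range x) := by
  have hM' : M ∈ adjoin F (Set.range x) :=
    Algebra.adjoin_le (Set.image_subset_range x _ |>.trans (subset_adjoin F _)) hM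
  refine adjoin_le_iff.mpr ?_
  rintro _ ⟨i, rfl⟩
  rcases eq_or_ne i k with rfl | hi
  · rw [update_self]
    exact mul_mem (inv_mem (subset_adjoin F _ ⟨i, rfl⟩)) hM'
  · rw [update_of_ne hi]
    exact subset_adjoin F _ ⟨i, rfl⟩

theorem IntermediateField.adjoin_range_update_inv_mul
    (hM : M ∈ Algebra.adjoin F (x '' {k}ᶜ)) (hM0 : M ≠ 0) :
    adjoin F (Set.range (update x k ((x k)⁻¹ * M))) = adjoin F (Set.range x) := by
  refine (adjoin_range_update_inv_mul_le hM).antisymm ?_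
  -- the same exchange, performed on the mutated family, gives `x` back
  have hback : update (update x k ((x k)⁻¹ * M)) k ((update x k ((x k)⁻¹ * M) k)⁻¹ * M) = x := by
    rw [update_idem, update_self, mul_inv, inv_inv, mul_assoc, inv_mul_cancel₀ hM0, mul_one,
      update_eq_self]
  conv_lhs => rw [← hback]
  exact adjoin_range_update_inv_mul_le (by rwa [Set.image_update_compl_singleton])

end Generation

section ExchangeBinomial

variable {ρ : Type*} [Fintype ρ]

def exchangeBinomial {K : Type*} [CommSemiring K] (x : ρ → K) (a : ρ → ℤ) : K :=
  ∏ j, x j ^ (a j).toNat + ∏ j, x j ^ (-a j).toNat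

variable {R K : Type*} [CommRing R] [CommRing K] [Algebra R K]

theorem aeval_exchangeBinomial_X (x : ρ → K) (a : ρ → ℤ) :
    MvPolynomial.aeval x (exchangeBinomial MvPolynomial.X a : MvPolynomial ρ R) =
      exchangeBinomial x a := by
  simp [exchangeBinomial]

theorem exchangeBinomial_X_ne_zero [CharZero R] (a : ρ → ℤ) :
    (exchangeBinomial MvPolynomial.X a : MvPolynomial ρ R) ≠ 0 := by
  intro h
  have := congrArg (MvPolynomial.eval fun _ => (1 : R)) h
  norm_num [exchangeBinomial] at this

theorem AlgebraicIndependent.exchangeBinomial_ne_zero [CharZero R] {x : ρ → K}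
    (hx : AlgebraicIndependent R x) (a : ρ → ℤ) : exchangeBinomial x a ≠ 0 := by
  rw [← aeval_exchangeBinomial_X (R := R)]
  exact fun h => exchangeBinomial_X_ne_zero a (hx (h.trans (map_zero _).symm))

theorem prod_pow_mem_adjoin_image_compl [DecidableEq ρ] (x : ρ → K) {k : ρ} {e : ρ → ℕ}
    (he : e k = 0) : ∏ j, x j ^ e j ∈ Algebra.adjoin R (x '' {k}ᶜ) := by
  refine Subalgebra.prod_mem _ fun j _ => ?_
  rcases eq_or_ne j k with rfl | hj
  · rw [he, pow_zero]
    exact one_mem _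
  · exact pow_mem (Algebra.subset_adjoin (Set.mem_image_of_mem x hj)) _

theorem exchangeBinomial_mem_adjoin_image_compl [DecidableEq ρ] (x : ρ → K) {a : ρ → ℤ} {k : ρ}
    (ha : a k = 0) : exchangeBinomial x a ∈ Algebra.adjoin R (x '' {k}ᶜ) :=
  add_mem (prod_pow_mem_adjoin_image_compl x (by simp [ha]))
    (prod_pow_mem_adjoin_image_compl x (by simp [ha]))

end ExchangeBinomial

theorem seedMutX_eq_update {n : ℕ} (x : Fin n ⊕ Fin n → CField n)
    (A : Matrix (Fin n ⊕ Fin n) (Fin n) ℤ) (k : Fin n) :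
    seedMutX x A k =
      update x (Sum.inl k) ((x (Sum.inl k))⁻¹ * exchangeBinomial x fun j => A j k) := by
  funext i
  rcases i with i | i
  · rcases eq_or_ne i k with rfl | hi
    · simp [seedMutX, exchangeBinomial, Fintype.prod_sum_type]
    · simp [seedMutX, hi]
  · simp [seedMutX]

section Skew

variable {ρ : Type*} {n : ℕ} {e : Fin n → ρ} {A : Matrix ρ (Fin n) ℤ}
  {d : Fin n → ℤ}

theorem diag_eq_zero_of_skew (hd : ∀ i, 0 < d i)
    (hA : ∀ i j, A (e i) j * d j = -A (e j) i * d i) (k : Fin n) : A (e k) k = 0 := by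
  have := hA k k
  nlinarith [hd k]

theorem max_zero_mul_eq_of_skew (hd : ∀ i, 0 < d i)
    (hA : ∀ i j, A (e i) j * d j = -A (e j) i * d i) (i j : Fin n) :
    max (A (e i) j) 0 * d j = max (-A (e j) i) 0 * d i := by
  rw [max_mul_of_nonneg _ _ (hd j).le, max_mul_of_nonneg _ _ (hd i).le, hA, zero_mul, zero_mul]

theorem matMutate_skew [DecidableEq ρ] (he : Injective e) (hd : ∀ i, 0 < d i)
    (hA : ∀ i j, A (e i) j * d j = -A (e j) i * d i) (k i j : Fin n) :
    matMutate e A k (e i) j * d j = -matMutate e A k (e j) i * d i := by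
  simp only [matMutate, he.eq_iff]
  by_cases hik : i = k
  · subst hik
    simp only [true_or, or_true, if_true]
    linear_combination -hA i j
  by_cases hjk : j = k
  · subst hjk
    simp only [true_or, or_true, if_true]
    linear_combination -hA i j
  rw [if_neg (by tauto), if_neg (by tauto)]
  linear_combination hA i j + A (e i) k * max_zero_mul_eq_of_skew hd hA k j
    + max (-A (e i) k) 0 * hA k j + A (e j) k * max_zero_mul_eq_of_skew hd hA k i
    + max (-A (e j) k) 0 * hA k i

end Skew

/-- If `(x, A)` is a seed (so `x` is a free generating set of `F` over `ℚ`,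
i.e. algebraically independent and generating `F` as a field extension of `ℚ`, and the upper
part of `A` is skew-symmetrizable), then for any `k` the mutated `2n`-tuple is again a free
generating set of `F` over `ℚ`; in particular `μ_k(x, A)` is again a seed. -/
theorem seed_mutation_is_seed {n : ℕ} (x : Fin n ⊕ Fin n → CField n)
    (A : Matrix (Fin n ⊕ Fin n) (Fin n) ℤ)
    (hindep : AlgebraicIndependent ℚ x)
    (hgen : IntermediateField.adjoin ℚ (Set.range x) = ⊤)
    (hskew : ∃ d : Fin n → ℤ, (∀ i, 0 < d i) ∧
      ∀ i j, A (Sum.inl i) j * d j = -A (Sum.inl j) i * d i)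
    (k : Fin n) :
    AlgebraicIndependent ℚ (seedMutX x A k) ∧
    IntermediateField.adjoin ℚ (Set.range (seedMutX x A k)) = ⊤ ∧
    ∃ d : Fin n → ℤ, (∀ i, 0 < d i) ∧
      ∀ i j, matMutate Sum.inl A k (Sum.inl i) j * d j
        = -(matMutate Sum.inl A k (Sum.inl j) i) * d i := by
  obtain ⟨d, hd, hA⟩ := hskew
  have hM : exchangeBinomial x (fun j => A j k) ∈ Algebra.adjoin ℚ (x '' {Sum.inl k}ᶜ) :=
    exchangeBinomial_mem_adjoin_image_compl x (diag_eq_zero_of_skew hd hA k)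
  have hM0 : exchangeBinomial x (fun j => A j k) ≠ 0 := hindep.exchangeBinomial_ne_zero _
  rw [seedMutX_eq_update]
  refine ⟨hindep.update_inv_mul hM hM0, ?_, d, hd, matMutate_skew Sum.inl_injective hd hA k⟩
  rw [IntermediateField.adjoin_range_update_inv_mul hM hM0, hgen]
end
end

section
/- Let c = (-1,2) ∈ ℝ^2, and define vectors l_i, r_i ∈ ℝ^2 for i ∈ ℤ by: r_i = (0,-1) + i·c for i ≥ 0, r_i = (0,1) - (i+1)·c for i ≤ -1, l_i = (-1,0) + 2i·c for i ≥ 0, and l_i = (1,0) - 2(i+1)·c for i ≤ -1. Then the closure in ℝ^2 of the union over all i ∈ ℤ of the cones C({l_i, r_i}) and C({l_i, r_{i+1}}) equals ℝ^2. -/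
/-- The cone `C(V)` spanned by a finite set `V` of vectors in `ℝ²`:
the set of nonnegative real combinations `∑_{v ∈ V} a_v • v` with `a_v ≥ 0`. -/
def cone (V : Finset (ℝ × ℝ)) : Set (ℝ × ℝ) :=
  {z | ∃ a : ℝ × ℝ → ℝ, (∀ v, 0 ≤ a v) ∧ z = ∑ v ∈ V, a v • v}

/-- The vector `c = (-1, 2)`. -/
noncomputable def cvec : ℝ × ℝ := (-1, 2)

/-- `r_i = (0,-1) + i • c` for `i ≥ 0` and `r_i = (0,1) - (i+1) • c` for `i ≤ -1`. -/
noncomputable def rvec (i : ℤ) : ℝ × ℝ :=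
  if 0 ≤ i then (0, -1) + (i : ℝ) • cvec else (0, 1) - ((i : ℝ) + 1) • cvec

/-- `l_i = (-1,0) + 2i • c` for `i ≥ 0` and `l_i = (1,0) - 2(i+1) • c` for `i ≤ -1`. -/
noncomputable def lvec (i : ℤ) : ℝ × ℝ :=
  if 0 ≤ i then (-1, 0) + (2 * (i : ℝ)) • cvec else (1, 0) - (2 * ((i : ℝ) + 1)) • cvec

lemma mem_cone_pair {v w z : ℝ × ℝ} {a b : ℝ} (ha : 0 ≤ a) (hb : 0 ≤ b)
    (hz : z = a • v + b • w) : z ∈ cone {v, w} := by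
  classical
  by_cases hvw : v = w
  · subst hvw
    refine ⟨fun u => if u = v then a + b else 0, ?_, ?_⟩
    · intro u; dsimp only; split_ifs
      · exact add_nonneg ha hb
      · exact le_rfl
    · have h : ({v, v} : Finset (ℝ × ℝ)) = {v} := by simp
      rw [hz, h, Finset.sum_singleton]
      simp [add_smul]
  · refine ⟨fun u => if u = v then a else b, ?_, ?_⟩
    · intro u; dsimp only; split_ifs
      · exact ha
      · exact hb
    · rw [hz, Finset.sum_pair hvw]
      simp [Ne.symm hvw]

lemma cover1 (i : ℤ) (hi : 0 ≤ i) (z : ℝ × ℝ)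
    (ha : 0 ≤ (i : ℝ) * (2 * z.1 + z.2) - z.1)
    (hb : 0 ≤ -2 * (i : ℝ) * (2 * z.1 + z.2) - z.2) :
    z ∈ cone {lvec i, rvec i} := by
  refine mem_cone_pair ha hb ?_
  simp only [lvec, rvec, cvec, if_pos hi]
  rw [Prod.ext_iff]
  constructor <;> simp <;> ring

lemma cover2 (i : ℤ) (hi : 0 ≤ i) (z : ℝ × ℝ)
    (ha : 0 ≤ -((i : ℝ) * (2 * z.1 + z.2) + z.1 + z.2))
    (hb : 0 ≤ 2 * (i : ℝ) * (2 * z.1 + z.2) + z.2) :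
    z ∈ cone {lvec i, rvec (i + 1)} := by
  refine mem_cone_pair ha hb ?_
  simp only [lvec, rvec, cvec, if_pos hi, if_pos (by omega : (0:ℤ) ≤ i + 1)]
  rw [Prod.ext_iff]
  constructor <;> simp <;> push_cast <;> ring

lemma cover3 (i : ℤ) (hi : i ≤ -1) (z : ℝ × ℝ)
    (ha : 0 ≤ -(((i : ℝ) + 1) * (2 * z.1 + z.2)) + z.1)
    (hb : 0 ≤ 2 * ((i : ℝ) + 1) * (2 * z.1 + z.2) + z.2) :
    z ∈ cone {lvec i, rvec i} := by
  refine mem_cone_pair ha hb ?_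
  simp only [lvec, rvec, cvec, if_neg (by omega : ¬ (0:ℤ) ≤ i)]
  rw [Prod.ext_iff]
  constructor <;> simp <;> ring

lemma cover4 (i : ℤ) (hi : i ≤ -2) (z : ℝ × ℝ)
    (ha : 0 ≤ ((i : ℝ) + 2) * (2 * z.1 + z.2) - z.1)
    (hb : 0 ≤ -2 * ((i : ℝ) + 1) * (2 * z.1 + z.2) - z.2) :
    z ∈ cone {lvec i, rvec (i + 1)} := by
  refine mem_cone_pair ha hb ?_
  simp only [lvec, rvec, cvec, if_neg (by omega : ¬ (0:ℤ) ≤ i),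
    if_neg (by omega : ¬ (0:ℤ) ≤ i + 1)]
  rw [Prod.ext_iff]
  constructor <;> simp <;> push_cast <;> ring

lemma cover5 (z : ℝ × ℝ) (hx : 0 ≤ z.1) (hy : z.2 ≤ 0) :
    z ∈ cone {lvec (-1), rvec (-1 + 1)} := by
  refine mem_cone_pair (a := z.1) (b := -z.2) hx (by linarith) ?_
  norm_num [lvec, rvec, cvec, Prod.ext_iff]

lemma mem_S (z : ℝ × ℝ) (hs : 2 * z.1 + z.2 ≠ 0) :
    z ∈ ⋃ i : ℤ, cone {lvec i, rvec i} ∪ cone {lvec i, rvec (i + 1)} := by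
  by_cases hsp : 0 ≤ z.1 ∧ z.2 ≤ 0
  · exact Set.mem_iUnion.mpr ⟨-1, Set.mem_union_right _ (cover5 z hsp.1 hsp.2)⟩
  · rcases hs.lt_or_gt with hneg | hpos
    · -- s < 0
      have hx : z.1 < 0 := by
        rcases not_and_or.mp hsp with h | h
        · exact not_le.mp h
        · have := not_le.mp h; linarith
      by_cases hxy : z.1 + z.2 ≤ 0
      · by_cases hy : z.2 ≤ 0
        · exact Set.mem_iUnion.mpr ⟨0, Set.mem_union_left _
            (cover1 0 le_rfl z (by push_cast; linarith) (by push_cast; linarith))⟩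
        · exact Set.mem_iUnion.mpr ⟨0, Set.mem_union_right _
            (cover2 0 le_rfl z (by push_cast; linarith) (by push_cast; linarith))⟩
      · push_neg at hxy
        set q : ℝ := (z.1 + z.2) / (-(2 * z.1 + z.2)) with hq
        have hqpos : 0 ≤ q := div_nonneg (by linarith) (by linarith)
        have hipos : 0 ≤ ⌈q⌉ := Int.ceil_nonneg hqpos
        set i : ℤ := ⌈q⌉ with hi
        have h1 : z.1 + z.2 ≤ (i : ℝ) * (-(2 * z.1 + z.2)) :=
          (div_le_iff₀ (by linarith)).mp (Int.le_ceil q)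
        have h2 : (i : ℝ) * (-(2 * z.1 + z.2)) < -z.1 := by
          have h3 : (i : ℝ) < q + 1 := Int.ceil_lt_add_one q
          have h4 : (i : ℝ) * (-(2 * z.1 + z.2)) < (q + 1) * (-(2 * z.1 + z.2)) :=
            mul_lt_mul_of_pos_right h3 (by linarith)
          have h5 : q * (-(2 * z.1 + z.2)) = z.1 + z.2 := div_mul_cancel₀ _ (by linarith)
          nlinarith
        by_cases hb : z.2 ≤ 2 * ((i : ℝ) * (-(2 * z.1 + z.2)))
        · exact Set.mem_iUnion.mpr ⟨i, Set.mem_union_left _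
            (cover1 i hipos z (by nlinarith) (by nlinarith))⟩
        · push_neg at hb
          exact Set.mem_iUnion.mpr ⟨i, Set.mem_union_right _
            (cover2 i hipos z (by nlinarith) (by nlinarith))⟩
    · -- s > 0
      have hxy : 0 ≤ z.1 + z.2 := by
        by_contra h
        push_neg at h
        exact hsp ⟨by linarith, by linarith⟩
      by_cases hx : 0 ≤ z.1
      · have hy : 0 < z.2 := not_le.mp (fun h => hsp ⟨hx, h⟩)
        refine Set.mem_iUnion.mpr ⟨-1, Set.mem_union_left _
          (cover3 (-1) le_rfl z ?_ ?_)⟩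
        · push_cast; linarith
        · push_cast; linarith
      · push_neg at hx
        set q : ℝ := (-z.1) / (2 * z.1 + z.2) with hq
        have hqpos : 0 < q := div_pos (by linarith) hpos
        have hj1 : 1 ≤ ⌈q⌉ := Int.ceil_pos.mpr hqpos
        set j : ℤ := ⌈q⌉ with hj
        have h1 : -z.1 ≤ (j : ℝ) * (2 * z.1 + z.2) :=
          (div_le_iff₀ hpos).mp (Int.le_ceil q)
        have h2 : (j : ℝ) * (2 * z.1 + z.2) < z.1 + z.2 := by
          have h3 : (j : ℝ) < q + 1 := Int.ceil_lt_add_one q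
          have h4 : (j : ℝ) * (2 * z.1 + z.2) < (q + 1) * (2 * z.1 + z.2) :=
            mul_lt_mul_of_pos_right h3 hpos
          have h5 : q * (2 * z.1 + z.2) = -z.1 := div_mul_cancel₀ _ (ne_of_gt hpos)
          nlinarith
        by_cases hb : 2 * ((j : ℝ) * (2 * z.1 + z.2)) ≤ z.2
        · refine Set.mem_iUnion.mpr ⟨-1 - j, Set.mem_union_left _
            (cover3 (-1 - j) (by omega) z ?_ ?_)⟩
          · push_cast; nlinarith
          · push_cast; nlinarith
        · push_neg at hb
          refine Set.mem_iUnion.mpr ⟨-1 - j, Set.mem_union_right _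
            (cover4 (-1 - j) (by omega) z ?_ ?_)⟩
          · push_cast; nlinarith
          · push_cast; nlinarith

/-- the closure in `ℝ²` of the union over all `i ∈ ℤ` of the cones
`C({l_i, r_i})` and `C({l_i, r_{i+1}})` equals `ℝ²`. -/
theorem closure_union_cones_eq_univ :
    closure (⋃ i : ℤ, cone {lvec i, rvec i} ∪ cone {lvec i, rvec (i + 1)})
      = Set.univ := by
  apply Set.eq_univ_of_forall
  intro p
  by_cases hp : 2 * p.1 + p.2 ≠ 0
  · exact subset_closure (mem_S p hp)
  · push_neg at hp
    have htend : Filter.Tendsto (fun n : ℕ => ((p.1, p.2 + 1 / (n + 1)) : ℝ × ℝ))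
        Filter.atTop (nhds p) := by
      have : Filter.Tendsto (fun n : ℕ => p.2 + 1 / ((n : ℝ) + 1)) Filter.atTop
          (nhds (p.2 + 0)) :=
        tendsto_const_nhds.add tendsto_one_div_add_atTop_nhds_zero_nat
      rw [add_zero] at this
      have h := (tendsto_const_nhds (x := p.1) (f := Filter.atTop (α := ℕ))).prodMk_nhds this
      simpa using h
    refine mem_closure_of_tendsto htend (Filter.Eventually.of_forall fun n => ?_)
    apply mem_S
    have hpos : (0:ℝ) < 1 / ((n : ℝ) + 1) := by positivity
    simp only
    intro h
    have : (1 : ℝ) / ((n : ℝ) + 1) = 0 := by linarith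
    linarith
end

section
/- Let c = (-1,2) ∈ ℝ^2, and define vectors l_i, r_i ∈ ℝ^2 for i ∈ ℤ by: r_i = (0,-1) + i·c for i ≥ 0, r_i = (0,1) - (i+1)·c for i ≤ -1, l_i = (-1,0) + 2i·c for i ≥ 0, and l_i = (1,0) - 2(i+1)·c for i ≤ -1. Then every lattice point z ∈ ℤ^2 with z ∉ C({c}) lies in C({l_i, r_i}) or in C({l_i, r_{i+1}}) for some i ∈ ℤ. -/
lemma mem_cone_two {u v w : ℝ × ℝ} (huv : u ≠ v) {a b : ℝ}
    (ha : 0 ≤ a) (hb : 0 ≤ b) (hw : w = a • u + b • v) :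
    w ∈ cone {u, v} := by
  refine ⟨fun p => if p = u then a else b, fun p => ?_, ?_⟩
  · dsimp only; split <;> assumption
  · rw [Finset.sum_pair huv]
    simp only [if_pos rfl, if_neg (Ne.symm huv)]
    exact hw

/-- Case `u < 0`, sector between `l_i` and `r_i`, `i ≥ 0`. -/
lemma case_neg_lr (i : ℤ) (hi : 0 ≤ i) (x y : ℝ)
    (h1 : x ≤ (i:ℝ) * (2*x+y)) (h2 : (2*(i:ℝ)+1)*(2*x+y) ≤ 2*x) :
    (x, y) ∈ cone {lvec i, rvec i} := by
  have hi' : (0:ℝ) ≤ (i:ℝ) := by exact_mod_cast hi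
  refine mem_cone_two ?_ (a := (i:ℝ)*(2*x+y) - x) (b := 2*x - (2*(i:ℝ)+1)*(2*x+y))
    (by linarith) (by linarith) ?_
  · intro h
    rw [lvec, rvec, if_pos hi, if_pos hi] at h
    simp only [cvec, Prod.smul_mk, Prod.mk_add_mk, Prod.mk.injEq, smul_eq_mul] at h
    obtain ⟨h1, h2⟩ := h
    linarith
  · rw [lvec, rvec, if_pos hi, if_pos hi]
    simp only [cvec, Prod.smul_mk, Prod.mk_add_mk, Prod.mk.injEq, smul_eq_mul]
    constructor <;> ring

/-- Case `u < 0`, sector between `l_i` and `r_{i+1}`, `i ≥ 0`. -/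
lemma case_neg_lr' (i : ℤ) (hi : 0 ≤ i) (x y : ℝ)
    (h1 : ((i:ℝ)+1) * (2*x+y) ≤ x) (h2 : 2*x ≤ (2*(i:ℝ)+1)*(2*x+y)) :
    (x, y) ∈ cone {lvec i, rvec (i+1)} := by
  have hi1 : 0 ≤ i + 1 := by omega
  have hc : ((i+1 : ℤ) : ℝ) = (i:ℝ) + 1 := by push_cast; ring
  refine mem_cone_two ?_ (a := x - ((i:ℝ)+1)*(2*x+y)) (b := (2*(i:ℝ)+1)*(2*x+y) - 2*x)
    (by linarith) (by linarith) ?_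
  · intro h
    rw [lvec, rvec, if_pos hi, if_pos hi1, hc] at h
    simp only [cvec, Prod.smul_mk, Prod.mk_add_mk, Prod.mk.injEq, smul_eq_mul] at h
    obtain ⟨h1, h2⟩ := h
    linarith
  · rw [lvec, rvec, if_pos hi, if_pos hi1, hc]
    simp only [cvec, Prod.smul_mk, Prod.mk_add_mk, Prod.mk.injEq, smul_eq_mul]
    constructor <;> ring

/-- Case `u > 0`, sector between `l_i` and `r_i`, `i ≤ -1`. -/
lemma case_pos_lr (i : ℤ) (hi : i ≤ -1) (x y : ℝ)
    (h1 : ((i:ℝ)+1) * (2*x+y) ≤ x) (h2 : 2*x ≤ (2*(i:ℝ)+3)*(2*x+y)) :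
    (x, y) ∈ cone {lvec i, rvec i} := by
  have hi0 : ¬ (0 ≤ i) := by omega
  refine mem_cone_two ?_ (a := x - ((i:ℝ)+1)*(2*x+y)) (b := (2*(i:ℝ)+3)*(2*x+y) - 2*x)
    (by linarith) (by linarith) ?_
  · intro h
    rw [lvec, rvec, if_neg hi0, if_neg hi0] at h
    simp only [cvec, Prod.smul_mk, Prod.mk_sub_mk, Prod.mk.injEq, smul_eq_mul] at h
    obtain ⟨h1, h2⟩ := h
    linarith
  · rw [lvec, rvec, if_neg hi0, if_neg hi0]
    simp only [cvec, Prod.smul_mk, Prod.mk_sub_mk, Prod.smul_mk, Prod.mk_add_mk,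
      Prod.mk.injEq, smul_eq_mul]
    constructor <;> ring

/-- Case `u > 0`, sector between `l_i` and `r_{i+1}`, `i ≤ -2`. -/
lemma case_pos_lr' (i : ℤ) (hi : i ≤ -2) (x y : ℝ)
    (h1 : x ≤ ((i:ℝ)+2) * (2*x+y)) (h2 : (2*(i:ℝ)+3)*(2*x+y) ≤ 2*x) :
    (x, y) ∈ cone {lvec i, rvec (i+1)} := by
  have hi0 : ¬ (0 ≤ i) := by omega
  have hi1 : ¬ (0 ≤ i + 1) := by omega
  have hi' : (i:ℝ) ≤ -2 := by exact_mod_cast hi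
  have hc : ((i+1 : ℤ) : ℝ) = (i:ℝ) + 1 := by push_cast; ring
  refine mem_cone_two ?_ (a := ((i:ℝ)+2)*(2*x+y) - x) (b := 2*x - (2*(i:ℝ)+3)*(2*x+y))
    (by linarith) (by linarith) ?_
  · intro h
    rw [lvec, rvec, if_neg hi0, if_neg hi1, hc] at h
    simp only [cvec, Prod.smul_mk, Prod.mk_sub_mk, Prod.mk.injEq, smul_eq_mul] at h
    obtain ⟨h1, h2⟩ := h
    linarith
  · rw [lvec, rvec, if_neg hi0, if_neg hi1, hc]
    simp only [cvec, Prod.smul_mk, Prod.mk_sub_mk, Prod.mk_add_mk, Prod.mk.injEq,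
      smul_eq_mul]
    constructor <;> ring

/-- The fourth-quadrant sector: between `l_{-1} = (1,0)` and `r_0 = (0,-1)`. -/
lemma case_fourth (x y : ℝ) (hx : 0 ≤ x) (hy : y ≤ 0) :
    (x, y) ∈ cone {lvec (-1), rvec 0} := by
  have h0 : ¬ ((0:ℤ) ≤ -1) := by omega
  have h1 : (0:ℤ) ≤ 0 := le_refl 0
  refine mem_cone_two ?_ (a := x) (b := -y) hx (by linarith) ?_
  · intro h
    rw [lvec, rvec, if_neg h0, if_pos h1] at h
    simp only [cvec, Prod.smul_mk, Prod.mk_sub_mk, Prod.mk_add_mk, Prod.mk.injEq,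
      smul_eq_mul] at h
    obtain ⟨h1, h2⟩ := h
    norm_num at h1
  · rw [lvec, rvec, if_neg h0, if_pos h1]
    simp only [cvec, Prod.smul_mk, Prod.mk_sub_mk, Prod.mk_add_mk, Prod.mk.injEq,
      smul_eq_mul]
    push_cast
    constructor <;> ring

/-- every lattice point `z ∈ ℤ²` with `z ∉ C({c})` lies in `C({l_i, r_i})`
or in `C({l_i, r_{i+1}})` for some `i ∈ ℤ`. -/
theorem lattice_point_in_some_cone (z : ℤ × ℤ)
    (hz : ((z.1 : ℝ), (z.2 : ℝ)) ∉ cone {cvec}) :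
    ∃ i : ℤ, ((z.1 : ℝ), (z.2 : ℝ)) ∈ cone {lvec i, rvec i} ∨
      ((z.1 : ℝ), (z.2 : ℝ)) ∈ cone {lvec i, rvec (i + 1)} := by
  set x : ℝ := (z.1 : ℝ) with hxdef
  set y : ℝ := (z.2 : ℝ) with hydef
  by_cases hfq : 0 ≤ x ∧ y ≤ 0
  · exact ⟨-1, Or.inr (by norm_num; exact case_fourth x y hfq.1 hfq.2)⟩
  push_neg at hfq
  rcases lt_trichotomy (2*x + y) 0 with hu | hu | hu
  · -- u < 0 : here x < 0
    have hxneg : x < 0 := by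
      by_contra hxp
      push_neg at hxp
      have := hfq hxp
      linarith
    set u : ℝ := 2*x + y with hudef
    set i : ℤ := ⌊x / u⌋ with hidef
    have hq : 0 < x / u := div_pos_of_neg_of_neg hxneg hu
    have hi0 : 0 ≤ i := Int.floor_nonneg.mpr (le_of_lt hq)
    have h1 : (i:ℝ) ≤ x / u := Int.floor_le _
    have h2 : x / u < (i:ℝ) + 1 := Int.lt_floor_add_one _
    have h1' : x ≤ (i:ℝ) * u := by
      have := mul_le_mul_of_nonpos_right h1 (le_of_lt hu)
      rwa [div_mul_cancel₀ x (ne_of_lt hu)] at this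
    have h2' : ((i:ℝ) + 1) * u ≤ x := by
      have := mul_le_mul_of_nonpos_right (le_of_lt h2) (le_of_lt hu)
      rw [div_mul_cancel₀ x (ne_of_lt hu)] at this
      linarith
    by_cases hm : (2*(i:ℝ)+1)*u ≤ 2*x
    · exact ⟨i, Or.inl (case_neg_lr i hi0 x y h1' hm)⟩
    · push_neg at hm
      exact ⟨i, Or.inr (case_neg_lr' i hi0 x y h2' (le_of_lt hm))⟩
  · -- u = 0 : z is a negative multiple of c, contradiction with hz
    exfalso
    rcases le_or_gt 0 x with hxp | hxn
    · have hy := hfq hxp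
      linarith
    · apply hz
      refine ⟨fun _ => -x, fun _ => by dsimp only; linarith, ?_⟩
      rw [Finset.sum_singleton]
      simp only [cvec, Prod.smul_mk, Prod.mk.injEq, smul_eq_mul]
      constructor <;> [skip; skip] <;> · show _ = _; nlinarith [hu]
  · -- u > 0
    set u : ℝ := 2*x + y with hudef
    have hxu : 2*x < u := by
      rcases lt_or_ge x 0 with hxn | hxp
      · linarith
      · have := hfq hxp
        linarith
    set i : ℤ := ⌊x / u⌋ - 1 with hidef
    have hq1 : x / u < 1 := by
      rw [div_lt_one hu]; linarith
    have hfl : ⌊x / u⌋ ≤ 0 := by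
      have : ⌊x / u⌋ < 1 := Int.floor_lt.mpr (by exact_mod_cast hq1)
      omega
    have hile : i ≤ -1 := by omega
    have hci : ((⌊x / u⌋ : ℤ) : ℝ) = (i:ℝ) + 1 := by
      rw [hidef]; push_cast; ring
    have h1 : ((i:ℝ) + 1) ≤ x / u := by rw [← hci]; exact Int.floor_le _
    have h2 : x / u < (i:ℝ) + 2 := by
      have := Int.lt_floor_add_one (x / u)
      rw [hci] at this; linarith
    have h1' : ((i:ℝ) + 1) * u ≤ x := by
      have := mul_le_mul_of_nonneg_right h1 (le_of_lt hu)
      rwa [div_mul_cancel₀ x (ne_of_gt hu)] at this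
    have h2' : x ≤ ((i:ℝ) + 2) * u := by
      have := mul_le_mul_of_nonneg_right (le_of_lt h2) (le_of_lt hu)
      rw [div_mul_cancel₀ x (ne_of_gt hu)] at this
      linarith
    by_cases hm : 2*x ≤ (2*(i:ℝ)+3)*u
    · exact ⟨i, Or.inl (case_pos_lr i hile x y h1' hm)⟩
    · push_neg at hm
      have hi2 : i ≤ -2 := by
        have hr : (2*(i:ℝ)+3)*u < u := by linarith
        have : 2*(i:ℝ)+3 < 1 := by
          by_contra hcon
          push_neg at hcon
          nlinarith
        have : (i:ℝ) < -1 := by linarith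
        have : i < -1 := by exact_mod_cast this
        omega
      exact ⟨i, Or.inr (case_pos_lr' i hi2 x y h2' (le_of_lt hm))⟩
end
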